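/- Let d ∈ ℕ with d ≥ 1, b_1,...,b_d ∈ ℕ with b_i ≥ 2 for all i ∈ {1,...,d}, m ∈ ℕ, and define q(b_1,...,b_d,m) = ((∏_{i=1}^d b_i^{b_i})^{m+1} − (∏_{i=1}^d b_i)^{m+1}) / (∏_{i=1}^d b_i^{b_i} − ∏_{i=1}^d b_i). If T is a finite vector homogeneous tree with b_T = (b_1,...,b_d) and of height at least m+2, then the cardinality of the set Str_2(T, m+1) = {F ∈ Str_2(T) : ⊗F(1) ⊆ ⊗T(m+1)} is exactly q(b_1,...,b_d,m). -/

import Mathlib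

/- Common definitions: trees (as subsets of a partial order), levels, heights,
strong subtrees, homogeneous trees, vector trees, level selections, and the
Ramsey-type numbers `UDHL`, `Mil`, `LS` from the paper
"Dense subsets of products of finite trees". -/

namespace DHL

section Basic

variable {α : Type*} [PartialOrder α]

/-- The set of (strict) predecessors of `t` inside `T`. -/
def below (T : Set α) (t : α) : Set α := {s ∈ T | s < t}

/-- `T` is a tree: it is nonempty and for every `t ∈ T` the set of predecessors of `t`
in `T` is finite and linearly ordered by `<`. -/
def IsTree (T : Set α) : Prop :=
  T.Nonempty ∧ ∀ t ∈ T, (below T t).Finite ∧ IsChain (· < ·) (below T t)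

/-- The length of a node `t` in `T`. -/
noncomputable def len (T : Set α) (t : α) : ℕ := (below T t).ncard

/-- The `n`-th level of `T`. -/
def level (T : Set α) (n : ℕ) : Set α := {t ∈ T | len T t = n}

/-- `T` has (finite) height `h`. -/
def HasHeight (T : Set α) (h : ℕ) : Prop := ∀ n, (level T n).Nonempty ↔ n < h

/-- `T` has infinite height. -/
def InfHeight (T : Set α) : Prop := ∀ n, (level T n).Nonempty

/-- The set of immediate successors of `t` in `T`. -/
def immSuc (T : Set α) (t : α) : Set α :=
  {s ∈ T | t < s ∧ len T s = len T t + 1}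

/-- `T` is uniquely rooted. -/
def UniquelyRooted (T : Set α) : Prop := ∃ r, level T 0 = {r}

/-- `C` is a maximal chain of `T`. -/
def MaxChainIn (T C : Set α) : Prop :=
  C ⊆ T ∧ IsChain (· < ·) C ∧
    ∀ C' : Set α, C' ⊆ T → IsChain (· < ·) C' → C ⊆ C' → C = C'

/-- `T` is balanced: all maximal chains of `T` have the same cardinality. -/
def BalancedTree (T : Set α) : Prop :=
  ∀ C C' : Set α, MaxChainIn T C → MaxChainIn T C' → Cardinal.mk C = Cardinal.mk C'

/-- `S` is a strong subtree of `T`. -/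
def IsStrongSubtree (T S : Set α) : Prop :=
  S ⊆ T ∧ IsTree S ∧ UniquelyRooted S ∧ BalancedTree S ∧
  (∀ n, (level S n).Nonempty → ∃ m, level S n ⊆ level T m) ∧
  (∀ s ∈ S, (immSuc S s).Nonempty →
    ∀ t ∈ immSuc T s, ∃! s', s' ∈ immSuc S s ∧ t ≤ s')

/-- The level set `L_T(S)` of a strong subtree `S` of `T`. -/
def levelSetOf (T S : Set α) : Set ℕ :=
  {m | ∃ n, (level S n).Nonempty ∧ level S n ⊆ level T m}

/-- A homogeneous tree with branching number `b`: uniquely rooted, of infinite height,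
every node has exactly `b` immediate successors. -/
def IsHomTree (T : Set α) (b : ℕ) : Prop :=
  IsTree T ∧ UniquelyRooted T ∧ InfHeight T ∧ ∀ t ∈ T, (immSuc T t).ncard = b

/-- A finite homogeneous tree with branching number `b` and height `h`: uniquely rooted,
balanced, of height `h`, and every non-maximal node has exactly `b` immediate successors. -/
def IsFinHomTree (T : Set α) (b h : ℕ) : Prop :=
  IsTree T ∧ UniquelyRooted T ∧ BalancedTree T ∧ HasHeight T h ∧
  ∀ t ∈ T, (immSuc T t).Nonempty → (immSuc T t).ncard = b

/-- `Suc_T(t)`, the set of successors of `t` in `T`. -/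
def sucSet (T : Set α) (t : α) : Set α := {s ∈ T | t ≤ s}

/-- The density of a subset `F` of the `n`-th level of `T`. -/
noncomputable def dens (T : Set α) (n : ℕ) (F : Set α) : ℝ :=
  (F.ncard : ℝ) / ((level T n).ncard : ℝ)

/-- The density of a subset `F` of the `n`-th level of `W` relative to the node `w`. -/
noncomputable def relDens (W : Set α) (n : ℕ) (w : α) (F : Set α) : ℝ :=
  ((F ∩ sucSet W w).ncard : ℝ) / ((level W n ∩ sucSet W w).ncard : ℝ)

end Basic

section Vector

variable {ι : Type*} {X : ι → Type*} [∀ i, PartialOrder (X i)]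

/-- `⊗T(n) = T_1(n) × ⋯ × T_d(n)`. -/
def vLevel (T : ∀ i, Set (X i)) (n : ℕ) : Set (∀ i, X i) :=
  {t | ∀ i, t i ∈ level (T i) n}

/-- The level product `⊗T` of a vector tree. -/
def levelProd (T : ∀ i, Set (X i)) : Set (∀ i, X i) := ⋃ n, vLevel T n

/-- `S` is a vector strong subtree of `T`: each `S i` is a strong subtree of `T i`
and all level sets coincide. -/
def IsVStrongSubtree (T S : ∀ i, Set (X i)) : Prop :=
  (∀ i, IsStrongSubtree (T i) (S i)) ∧
  ∀ i j, levelSetOf (T i) (S i) = levelSetOf (T j) (S j)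

variable {β : Type*} [PartialOrder β]

/-- `D` is a level selection on the vector tree `T` (of height `h`) with values subsets of the
homogeneous tree `W`, with level set given by the (strictly increasing) map `l`. -/
def IsLevelSelection (T : ∀ i, Set (X i)) (h : ℕ) (W : Set β)
    (D : (∀ i, X i) → Set β) (l : ℕ → ℕ) : Prop :=
  StrictMonoOn l (Set.Iio h) ∧ ∀ n < h, ∀ t ∈ vLevel T n, D t ⊆ level W (l n)

/-- The level selection `D` (on the ambient vector tree `T` of height `h` with level map `l`)
is `(w, S, ε)`-dense, where `S` is a vector strong subtree of `T` given by its sets of nodes: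
for each point `s` of `⊗S` (sitting at level `m` of `T`) we have `ℓ_W(w) ≤ l m` and
`dens(D s | w) ≥ ε`. -/
def SelDense (W : Set β) (w : β) (ε : ℝ) (T : ∀ i, Set (X i)) (h : ℕ) (l : ℕ → ℕ)
    (D : (∀ i, X i) → Set β) (S : ∀ i, Set (X i)) : Prop :=
  ∀ m < h, ∀ s ∈ vLevel T m, (∀ i, s i ∈ S i) →
    len W w ≤ l m ∧ ε ≤ relDens W (l m) w (D s)

/-- `(w, S, ε)`-strong denseness: `(w', S, ε)`-denseness for every immediate successor `w'`
of `w` in `W`. -/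
def SelStronglyDense (W : Set β) (w : β) (ε : ℝ) (T : ∀ i, Set (X i)) (h : ℕ) (l : ℕ → ℕ)
    (D : (∀ i, X i) → Set β) (S : ∀ i, Set (X i)) : Prop :=
  ∀ w' ∈ immSuc W w, SelDense W w' ε T h l D S

end Vector

section Numbers

/-- The defining property of the number `UDHL(b | k, ε)`. -/
def UDHLholds (ι : Type) (b : ι → ℕ) (k : ℕ) (ε : ℝ) (N : ℕ) : Prop :=
  ∀ (X : ι → Type) [∀ i, PartialOrder (X i)] (T : ∀ i, Set (X i)),
    (∀ i, IsHomTree (T i) (b i)) →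
    ∀ L : Finset ℕ, N ≤ L.card →
      ∀ D : Set (∀ i, X i), D ⊆ levelProd T →
        (∀ n ∈ L, ε * ((vLevel T n).ncard : ℝ) ≤ ((D ∩ vLevel T n).ncard : ℝ)) →
        ∃ S : ∀ i, Set (X i), IsVStrongSubtree T S ∧ (∀ i, HasHeight (S i) k) ∧
          levelProd S ⊆ D

/-- The uniform density Halpern–Läuchli number `UDHL(b | k, ε)`. -/
noncomputable def UDHL (ι : Type) (b : ι → ℕ) (k : ℕ) (ε : ℝ) : ℕ :=
  sInf {N | UDHLholds ι b k ε N}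

/-- The defining property of the Milliken number `Mil(b | m, k, r)`. -/
def MilHolds (ι : Type) (b : ι → ℕ) (m k r : ℕ) (M : ℕ) : Prop :=
  ∀ (X : ι → Type) [∀ i, PartialOrder (X i)] (T : ∀ i, Set (X i)) (h : ℕ),
    (∀ i, IsFinHomTree (T i) (b i) h) → M ≤ h →
    ∀ c : (∀ i, Set (X i)) → Fin r,
      ∃ S : ∀ i, Set (X i), IsVStrongSubtree T S ∧ (∀ i, HasHeight (S i) m) ∧
        ∀ R R' : ∀ i, Set (X i),
          IsVStrongSubtree S R → (∀ i, HasHeight (R i) k) →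
          IsVStrongSubtree S R' → (∀ i, HasHeight (R' i) k) → c R = c R'

/-- The Milliken number `Mil(b | m, k, r)`. -/
noncomputable def Mil (ι : Type) (b : ι → ℕ) (m k r : ℕ) : ℕ :=
  sInf {M | MilHolds ι b m k r M}

/-- The defining property of the level-selection number `LS(b, bW | k, ε)`. -/
def LSholds (ι : Type) (b : ι → ℕ) (bW k : ℕ) (ε : ℝ) (N : ℕ) : Prop :=
  ∀ (X : ι → Type) [∀ i, PartialOrder (X i)] (β : Type) [PartialOrder β]
    (T : ∀ i, Set (X i)) (h : ℕ) (W : Set β) (D : (∀ i, X i) → Set β) (l : ℕ → ℕ),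
    (∀ i, IsFinHomTree (T i) (b i) h) → IsHomTree W bW →
    IsLevelSelection T h W D l → N ≤ h →
    (∀ n < h, ∀ t ∈ vLevel T n, ε * ((level W (l n)).ncard : ℝ) ≤ ((D t).ncard : ℝ)) →
    ∃ (S : ∀ i, Set (X i)) (R : Set β),
      IsVStrongSubtree T S ∧ (∀ i, HasHeight (S i) k) ∧
      IsStrongSubtree W R ∧ HasHeight R k ∧
      ∀ n < k, ∀ w ∈ level R n, ∀ s ∈ vLevel S n, w ∈ D s

/-- The level-selection number `LS(b, bW | k, ε)`. -/
noncomputable def LS (ι : Type) (b : ι → ℕ) (bW k : ℕ) (ε : ℝ) : ℕ :=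
  sInf {N | LSholds ι b bW k ε N}

end Numbers

section Seq

/-- The type of finite sequences of naturals, carrying the (end-extension) prefix order;
the ambient type of the trees `b^{<ℕ}`. -/
def SeqT : Type := List ℕ

/-- The underlying list of an element of `SeqT`. -/
def toL (s : SeqT) : List ℕ := s

instance : PartialOrder SeqT where
  le s t := toL s <+: toL t
  le_refl s := List.prefix_refl _
  le_trans a b c hab hbc := List.IsPrefix.trans hab hbc
  le_antisymm a b h1 h2 :=
    List.Sublist.eq_of_length (List.IsPrefix.sublist h1)
      (Nat.le_antisymm (List.IsPrefix.length_le h1) (List.IsPrefix.length_le h2))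

/-- The tree `b^{<ℕ}` of all finite sequences with values in `{0, …, b-1}`. -/
def fullSeq (b : ℕ) : Set SeqT := {l | ∀ x ∈ toL l, x < b}

end Seq

end DHL

/-!
A strong subtree of height two of a finite homogeneous tree with branching number `b`, rooted
at a node `r` of level `n` and with its top level inside level `k > n`, consists of `r` and a
choice, for each of the `b` immediate successors `t` of `r`, of one of the `b ^ (k - n - 1)`
nodes of level `k` above `t`; there are `b ^ n` possible roots. In a vector tree the level
sets of the coordinates agree, so all roots lie on one level `n ≤ m`. For `k = m + 1` the count
is therefore `∑_{n ≤ m} P ^ n * Q ^ (m - n)` with `P = ∏ b_i` and `Q = ∏ b_i ^ b_i`, a geometric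
sum equal to `(Q ^ (m + 1) - P ^ (m + 1)) / (Q - P)`.
-/

namespace DHL

open Set

lemma ncard_univ_pi {ι : Type*} [Fintype ι] {Y : ι → Type*} (A : ∀ i, Set (Y i)) :
    (pi univ A).ncard = ∏ i, (A i).ncard := by
  rw [← Nat.card_coe_set_eq, Nat.card_congr (Equiv.Set.univPi A), Nat.card_pi]
  simp only [Nat.card_coe_set_eq]

lemma ncard_biUnion_of_const {ι γ : Type*} {s : Set ι} (hs : s.Finite) {f : ι → Set γ} {k : ℕ}
    (hfin : ∀ a ∈ s, (f a).Finite) (hcard : ∀ a ∈ s, (f a).ncard = k)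
    (hdisj : s.PairwiseDisjoint f) :
    (⋃ a ∈ s, f a).Finite ∧ (⋃ a ∈ s, f a).ncard = s.ncard * k := by
  refine ⟨hs.biUnion hfin, ?_⟩
  rw [hs.ncard_biUnion hfin hdisj, finsum_mem_congr rfl hcard,
    finsum_mem_eq_finite_toFinset_sum _ hs, Finset.sum_const, smul_eq_mul,
    ncard_eq_toFinset_card _ hs]

section Tree

variable {α : Type*} [PartialOrder α] {T : Set α}

lemma len_lt_len (hT : IsTree T) {s t : α} (hs : s ∈ T) (ht : t ∈ T) (hst : s < t) :
    len T s < len T t := by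
  refine ncard_lt_ncard ?_ (hT.2 t ht).1
  refine ssubset_iff_subset_ne.2 ⟨fun x hx => ⟨hx.1, hx.2.trans hst⟩, fun heq => ?_⟩
  have hss : s ∈ below T s := by rw [heq]; exact ⟨hs, hst⟩
  exact lt_irrefl s hss.2

lemma mem_level_len {t : α} (ht : t ∈ T) : t ∈ level T (len T t) := ⟨ht, rfl⟩

lemma len_lt_of_hasHeight {h : ℕ} (hh : HasHeight T h) {t : α} (ht : t ∈ T) : len T t < h :=
  (hh _).1 ⟨t, mem_level_len ht⟩

lemma eq_of_mem_level {t : α} {k k' : ℕ} (hk : t ∈ level T k) (hk' : t ∈ level T k') :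
    k = k' :=
  hk.2.symm.trans hk'.2

lemma isAntichain_level (hT : IsTree T) (k : ℕ) : IsAntichain (· ≤ ·) (level T k) := by
  intro x hx y hy hne hxy
  have := len_lt_len hT hx.1 hy.1 (lt_of_le_of_ne hxy hne)
  rw [hx.2, hy.2] at this
  exact lt_irrefl k this

lemma inter_Iic_eq_insert_below {t : α} (ht : t ∈ T) : T ∩ Iic t = insert t (below T t) := by
  ext x
  simp only [below, mem_inter_iff, mem_Iic, mem_insert_iff, mem_sep_iff]
  constructor
  · rintro ⟨hx, hxt⟩
    rcases hxt.eq_or_lt with rfl | hlt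
    exacts [Or.inl rfl, Or.inr ⟨hx, hlt⟩]
  · rintro (rfl | ⟨hx, hlt⟩)
    exacts [⟨ht, le_rfl⟩, ⟨hx, hlt.le⟩]

lemma isChain_inter_Iic (hT : IsTree T) {t : α} (ht : t ∈ T) :
    IsChain (· < ·) (T ∩ Iic t) := by
  rw [inter_Iic_eq_insert_below ht]
  exact (hT.2 t ht).2.insert fun y hy _ => Or.inr hy.2

lemma ncard_inter_Iic (hT : IsTree T) {t : α} (ht : t ∈ T) :
    (T ∩ Iic t).ncard = len T t + 1 := by
  rw [inter_Iic_eq_insert_below ht,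
    ncard_insert_of_notMem (fun h => lt_irrefl t h.2) (hT.2 t ht).1, len]

lemma le_of_len_le (hT : IsTree T) {t x y : α} (ht : t ∈ T) (hx : x ∈ T ∩ Iic t)
    (hy : y ∈ T ∩ Iic t) (hlen : len T x ≤ len T y) : x ≤ y := by
  rcases eq_or_ne x y with rfl | hne
  · exact le_rfl
  rcases isChain_inter_Iic hT ht hx hy hne with hxy | hyx
  · exact hxy.le
  · exact absurd (len_lt_len hT hy.1 hx.1 hyx) hlen.not_gt

lemma eq_of_len_eq (hT : IsTree T) {t x y : α} (ht : t ∈ T) (hx : x ∈ T ∩ Iic t)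
    (hy : y ∈ T ∩ Iic t) (hlen : len T x = len T y) : x = y :=
  (le_of_len_le hT ht hx hy hlen.le).antisymm (le_of_len_le hT ht hy hx hlen.ge)

lemma exists_parent (hT : IsTree T) {t : α} (ht : t ∈ T) {n : ℕ} (hn : len T t = n + 1) :
    ∃ p ∈ below T t, len T p = n ∧ ∀ y ∈ below T t, y ≤ p := by
  obtain ⟨hfin, hchain⟩ := hT.2 t ht
  obtain ⟨p, hp, hmax⟩ := hfin.exists_maximalFor id _
    (nonempty_of_ncard_ne_zero (by rw [← len, hn]; omega))
  have hle : ∀ y ∈ below T t, y ≤ p := by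
    intro y hy
    rcases eq_or_ne y p with rfl | hne
    · exact le_rfl
    rcases hchain hy hp hne with hyp | hpy
    · exact hyp.le
    · exact absurd (le_antisymm hpy.le (hmax hy hpy.le)) hpy.ne
  have hbelow : below T p = below T t \ {p} := by
    ext y
    constructor
    · rintro ⟨hy, hyp⟩
      exact ⟨⟨hy, hyp.trans hp.2⟩, hyp.ne⟩
    · rintro ⟨hy, hyp⟩
      exact ⟨hy.1, lt_of_le_of_ne (hle y hy) hyp⟩
  refine ⟨p, hp, ?_, hle⟩
  rw [len, hbelow, ncard_sdiff_singleton_of_mem hp, ← len, hn, Nat.add_sub_cancel]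

lemma exists_le_len_eq (hT : IsTree T) {t : α} (ht : t ∈ T) {k : ℕ} (hk : k ≤ len T t) :
    ∃ u ∈ T, u ≤ t ∧ len T u = k := by
  induction hn : len T t generalizing t with
  | zero => exact ⟨t, ht, le_rfl, by omega⟩
  | succ n ih =>
    rcases hk.eq_or_lt with rfl | hlt
    · exact ⟨t, ht, le_rfl, by omega⟩
    obtain ⟨p, hp, hpn, -⟩ := exists_parent hT ht hn
    obtain ⟨u, hu, hup, hulen⟩ := ih hp.1 (by omega) hpn
    exact ⟨u, hu, hup.trans hp.2.le, hulen⟩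

lemma exists_immSuc_le (hT : IsTree T) {t s : α} (ht : t ∈ T) (hs : s ∈ T) (hts : t < s) :
    ∃ u ∈ immSuc T t, u ≤ s := by
  have hlen := len_lt_len hT ht hs hts
  obtain ⟨u, hu, hus, hulen⟩ := exists_le_len_eq hT hs (k := len T t + 1) hlen
  have htu : t ≤ u := le_of_len_le hT hs ⟨ht, hts.le⟩ ⟨hu, hus⟩ (by omega)
  exact ⟨u, ⟨hu, lt_of_le_of_ne htu (by rintro rfl; omega), hulen⟩, hus⟩

lemma root_le (hT : IsTree T) {r : α} (hroot : level T 0 = {r}) {s : α} (hs : s ∈ T) :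
    r ≤ s := by
  obtain ⟨u, hu, hus, hulen⟩ := exists_le_len_eq hT hs (Nat.zero_le _)
  have hu0 : u ∈ level T 0 := ⟨hu, hulen⟩
  rw [hroot, mem_singleton_iff] at hu0
  exact hu0 ▸ hus

lemma ncard_le_of_isChain (hT : IsTree T) {h : ℕ} (hh : HasHeight T h) {C : Set α}
    (hCT : C ⊆ T) (hC : IsChain (· < ·) C) : C.Finite ∧ C.ncard ≤ h := by
  have hinj : InjOn (len T) C := by
    intro x hx y hy hxy
    by_contra hne
    rcases hC hx hy hne with hlt | hlt
    · exact (len_lt_len hT (hCT hx) (hCT hy) hlt).ne hxy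
    · exact (len_lt_len hT (hCT hy) (hCT hx) hlt).ne hxy.symm
  have himg : len T '' C ⊆ Iio h := by
    rintro - ⟨x, hx, rfl⟩
    exact len_lt_of_hasHeight hh (hCT hx)
  refine ⟨((finite_Iio h).subset himg).of_finite_image hinj, ?_⟩
  calc C.ncard = (len T '' C).ncard := hinj.ncard_image.symm
    _ ≤ (Iio h).ncard := ncard_le_ncard himg (finite_Iio h)
    _ = h := by simp

end Tree

section FinHomTree

variable {α : Type*} [PartialOrder α] {T : Set α} {b h : ℕ}

lemma maxChainIn_inter_Iic (hT : IsTree T) {t : α} (ht : t ∈ T)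
    (htop : ∀ s ∈ T, ¬t < s) : MaxChainIn T (T ∩ Iic t) := by
  refine ⟨inter_subset_left, isChain_inter_Iic hT ht, fun C hCT hC hsub => ?_⟩
  refine hsub.antisymm fun v hv => ?_
  rcases eq_or_ne v t with rfl | hne
  · exact ⟨ht, le_rfl⟩
  rcases hC hv (hsub ⟨ht, le_rfl⟩) hne with hvt | htv
  exacts [⟨hCT hv, hvt.le⟩, absurd htv (htop v (hCT hv))]

/-- Were `t` maximal, `T ∩ Iic t` would be a maximal chain shorter than the chain below a node
of the top level, contradicting balancedness. -/
lemma immSuc_nonempty (hT : IsFinHomTree T b h) {t : α} (ht : t ∈ T) (hlt : len T t + 1 < h) :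
    (immSuc T t).Nonempty := by
  obtain ⟨htree, -, hbal, hh, -⟩ := hT
  by_contra hemp
  have htop : ∀ s ∈ T, ¬t < s := fun s hs hts => by
    obtain ⟨u, hu, -⟩ := exists_immSuc_le htree ht hs hts
    exact hemp ⟨u, hu⟩
  obtain ⟨w, hw⟩ := (hh (h - 1)).2 (by omega)
  have hwmax : MaxChainIn T (T ∩ Iic w) := by
    refine ⟨inter_subset_left, isChain_inter_Iic htree hw.1, fun C hCT hC hsub => ?_⟩
    refine eq_of_subset_of_ncard_le hsub ?_ (ncard_le_of_isChain htree hh hCT hC).1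
    rw [ncard_inter_Iic htree hw.1, hw.2]
    have := (ncard_le_of_isChain htree hh hCT hC).2
    omega
  have hcard : Nat.card ↥(T ∩ Iic t) = Nat.card ↥(T ∩ Iic w) :=
    congrArg Cardinal.toNat (hbal _ _ (maxChainIn_inter_Iic htree ht htop) hwmax)
  rw [Nat.card_coe_set_eq, Nat.card_coe_set_eq, ncard_inter_Iic htree ht,
    ncard_inter_Iic htree hw.1, hw.2] at hcard
  omega

lemma ncard_immSuc (hT : IsFinHomTree T b h) (hb : 1 ≤ b) {t : α} (ht : t ∈ T)
    (hlt : len T t + 1 < h) : (immSuc T t).Finite ∧ (immSuc T t).ncard = b := by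
  have hcard := hT.2.2.2.2 t ht (immSuc_nonempty hT ht hlt)
  exact ⟨finite_of_ncard_ne_zero (by omega), hcard⟩

lemma level_succ_inter_Ici (hT : IsTree T) {t : α} (ht : t ∈ T) {k : ℕ} (hk : len T t ≤ k) :
    level T (k + 1) ∩ Ici t = ⋃ u ∈ level T k ∩ Ici t, immSuc T u := by
  ext s
  simp only [mem_iUnion, exists_prop]
  constructor
  · rintro ⟨⟨hs, hslen⟩, hts⟩
    obtain ⟨p, hp, hplen, hle⟩ := exists_parent hT hs hslen
    have htp : t ≤ p := by
      rcases (show t ≤ s from hts).eq_or_lt with rfl | hlt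
      · omega
      · exact hle t ⟨ht, hlt⟩
    exact ⟨p, ⟨⟨hp.1, hplen⟩, htp⟩, hs, hp.2, by omega⟩
  · rintro ⟨u, ⟨⟨hu, hulen⟩, htu⟩, hs, hus, hslen⟩
    exact ⟨⟨hs, by omega⟩, le_trans htu hus.le⟩

lemma pairwiseDisjoint_immSuc (hT : IsTree T) (k : ℕ) :
    (level T k).PairwiseDisjoint (immSuc T) := by
  intro u hu u' hu' hne
  refine disjoint_left.2 fun s ⟨hs, hus, _⟩ ⟨_, hu's, _⟩ => hne ?_
  exact eq_of_len_eq hT hs ⟨hu.1, hus.le⟩ ⟨hu'.1, hu's.le⟩ (hu.2.trans hu'.2.symm)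

lemma ncard_level_inter_Ici (hT : IsFinHomTree T b h) (hb : 1 ≤ b) {t : α} (ht : t ∈ T)
    {k : ℕ} (hk : len T t + k < h) :
    (level T (len T t + k) ∩ Ici t).Finite ∧ (level T (len T t + k) ∩ Ici t).ncard = b ^ k := by
  induction k with
  | zero =>
    have hsingle : level T (len T t) ∩ Ici t = {t} := by
      refine eq_singleton_iff_unique_mem.2 ⟨⟨mem_level_len ht, le_rfl⟩, ?_⟩
      rintro s ⟨⟨hs, hslen⟩, hts⟩
      by_contra hne
      exact (len_lt_len hT.1 ht hs (lt_of_le_of_ne hts (Ne.symm hne))).ne' hslen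
    simp [hsingle]
  | succ k ih =>
    obtain ⟨hfin, hcard⟩ := ih (by omega)
    have himm : ∀ u ∈ level T (len T t + k) ∩ Ici t,
        (immSuc T u).Finite ∧ (immSuc T u).ncard = b :=
      fun u hu => ncard_immSuc hT hb hu.1.1 (by rw [hu.1.2]; omega)
    rw [← add_assoc, level_succ_inter_Ici hT.1 ht (by omega), pow_succ, ← hcard]
    exact ncard_biUnion_of_const hfin (fun u hu => (himm u hu).1) (fun u hu => (himm u hu).2)
      ((pairwiseDisjoint_immSuc hT.1 _).subset inter_subset_left)

lemma ncard_level (hT : IsFinHomTree T b h) (hb : 1 ≤ b) {k : ℕ} (hk : k < h) :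
    (level T k).Finite ∧ (level T k).ncard = b ^ k := by
  obtain ⟨r, hroot⟩ := hT.2.1
  have hr : r ∈ level T 0 := by rw [hroot]; rfl
  have hlevel : level T k = level T (len T r + k) ∩ Ici r := by
    rw [hr.2, zero_add, eq_comm, inter_eq_left]
    exact fun s hs => root_le hT.1 hroot hs.1
  rw [hlevel]
  exact ncard_level_inter_Ici hT hb hr.1 (by rw [hr.2]; omega)

end FinHomTree

section HeightTwo

variable {α : Type*} [PartialOrder α] {r : α} {A : Set α}

lemma below_insert_self (hrA : ∀ a ∈ A, r < a) : below (insert r A) r = ∅ := by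
  refine eq_empty_of_forall_notMem fun y ⟨hy, hyr⟩ => ?_
  rcases hy with rfl | hy
  exacts [lt_irrefl y hyr, lt_asymm hyr (hrA y hy)]

lemma below_insert_of_mem (hrA : ∀ a ∈ A, r < a) (hA : IsAntichain (· ≤ ·) A) {a : α}
    (ha : a ∈ A) : below (insert r A) a = {r} := by
  refine eq_singleton_iff_unique_mem.2 ⟨⟨mem_insert r A, hrA a ha⟩, ?_⟩
  rintro y ⟨hy | hy, hya⟩
  · exact hy
  · exact absurd hya.le (hA hy ha hya.ne)

lemma len_insert_self (hrA : ∀ a ∈ A, r < a) : len (insert r A) r = 0 := by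
  rw [len, below_insert_self hrA, ncard_empty]

lemma len_insert_of_mem (hrA : ∀ a ∈ A, r < a) (hA : IsAntichain (· ≤ ·) A) {a : α}
    (ha : a ∈ A) : len (insert r A) a = 1 := by
  rw [len, below_insert_of_mem hrA hA ha, ncard_singleton]

lemma level_insert_zero (hrA : ∀ a ∈ A, r < a) (hA : IsAntichain (· ≤ ·) A) :
    level (insert r A) 0 = {r} := by
  refine eq_singleton_iff_unique_mem.2 ⟨⟨mem_insert r A, len_insert_self hrA⟩, ?_⟩
  rintro y ⟨hy | hy, hlen⟩
  · exact hy
  · rw [len_insert_of_mem hrA hA hy] at hlen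
    exact absurd hlen one_ne_zero

lemma level_insert_one (hrA : ∀ a ∈ A, r < a) (hA : IsAntichain (· ≤ ·) A) :
    level (insert r A) 1 = A := by
  ext y
  refine ⟨fun ⟨hy, hlen⟩ => ?_, fun hy => ⟨mem_insert_of_mem r hy, len_insert_of_mem hrA hA hy⟩⟩
  rcases hy with rfl | hy
  · rw [len_insert_self hrA] at hlen
    exact absurd hlen zero_ne_one
  · exact hy

lemma len_insert_lt_two (hrA : ∀ a ∈ A, r < a) (hA : IsAntichain (· ≤ ·) A) {y : α}
    (hy : y ∈ insert r A) : len (insert r A) y < 2 := by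
  rcases hy with rfl | hy
  · rw [len_insert_self hrA]; omega
  · rw [len_insert_of_mem hrA hA hy]; omega

lemma hasHeight_insert (hrA : ∀ a ∈ A, r < a) (hA : IsAntichain (· ≤ ·) A) (hAne : A.Nonempty) :
    HasHeight (insert r A) 2 := by
  intro k
  refine ⟨fun ⟨y, hy, hlen⟩ => hlen ▸ len_insert_lt_two hrA hA hy, fun hk => ?_⟩
  interval_cases k
  · rw [level_insert_zero hrA hA]; exact singleton_nonempty r
  · rwa [level_insert_one hrA hA]

lemma isTree_insert (hrA : ∀ a ∈ A, r < a) (hA : IsAntichain (· ≤ ·) A) :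
    IsTree (insert r A) := by
  refine ⟨insert_nonempty r A, fun y hy => ?_⟩
  rcases hy with rfl | hy
  · rw [below_insert_self hrA]; exact ⟨finite_empty, subsingleton_empty.isChain⟩
  · rw [below_insert_of_mem hrA hA hy]; exact ⟨finite_singleton r, subsingleton_singleton.isChain⟩

lemma immSuc_insert_self (hrA : ∀ a ∈ A, r < a) (hA : IsAntichain (· ≤ ·) A) :
    immSuc (insert r A) r = A := by
  ext y
  refine ⟨fun ⟨hy, hry, _⟩ => ?_, fun hy => ⟨mem_insert_of_mem r hy, hrA y hy, ?_⟩⟩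
  · rcases hy with rfl | hy
    exacts [absurd hry (lt_irrefl y), hy]
  · rw [len_insert_of_mem hrA hA hy, len_insert_self hrA]

lemma immSuc_insert_of_mem (hrA : ∀ a ∈ A, r < a) (hA : IsAntichain (· ≤ ·) A) {a : α}
    (ha : a ∈ A) : immSuc (insert r A) a = ∅ :=
  eq_empty_of_forall_notMem fun y ⟨hy, _, hlen⟩ => by
    have := len_insert_lt_two hrA hA hy
    rw [len_insert_of_mem hrA hA ha] at hlen
    omega

/-- Every maximal chain of `insert r A` is a pair `{r, a}` with `a ∈ A`. -/
lemma balancedTree_insert (hrA : ∀ a ∈ A, r < a) (hA : IsAntichain (· ≤ ·) A)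
    (hAne : A.Nonempty) : BalancedTree (insert r A) := by
  have hpair : ∀ {a}, a ∈ A → ({r, a} : Set α) ⊆ insert r A :=
    fun ha => insert_subset_insert (singleton_subset_iff.2 ha)
  have hmax : ∀ C, MaxChainIn (insert r A) C → ∃ a ∈ A, C = {r, a} := by
    rintro C ⟨hCS, hC, hCmax⟩
    by_cases hCA : ∃ a ∈ A, a ∈ C
    · obtain ⟨a, ha, haC⟩ := hCA
      refine ⟨a, ha, hCmax _ (hpair ha) (IsChain.pair (hrA a ha)) fun y hy => ?_⟩
      rcases hCS hy with rfl | hyA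
      · exact mem_insert y _
      · by_contra hya
        have hne : y ≠ a := fun h => hya (h ▸ mem_insert_of_mem r rfl)
        rcases hC hy haC hne with hlt | hlt
        exacts [hA hyA ha hne hlt.le, hA ha hyA hne.symm hlt.le]
    · push Not at hCA
      obtain ⟨a, ha⟩ := hAne
      have hCr : C ⊆ {r, a} := fun y hy => by
        rcases hCS hy with rfl | hyA
        exacts [mem_insert y _, absurd hy (hCA y hyA)]
      have hC_eq := hCmax _ (hpair ha) (IsChain.pair (hrA a ha)) hCr
      exact absurd (hC_eq ▸ mem_insert_of_mem r rfl) (hCA a ha)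
  have hcard : ∀ a ∈ A, Cardinal.mk ({r, a} : Set α) = 2 := fun a ha => by
    rw [Cardinal.mk_insert (by simpa using (hrA a ha).ne), Cardinal.mk_singleton,
      one_add_one_eq_two]
  intro C C' hC hC'
  obtain ⟨a, ha, rfl⟩ := hmax C hC
  obtain ⟨a', ha', rfl⟩ := hmax C' hC'
  rw [hcard a ha, hcard a' ha']

end HeightTwo

section StrTwo

variable {α : Type*} [PartialOrder α] {T : Set α} {r : α} {b h n k : ℕ}

lemma isStrongSubtree_insert (hT : IsTree T) {A : Set α} (hsub : insert r A ⊆ T)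
    (hAne : A.Nonempty) (hrA : ∀ a ∈ A, r < a) (hr : r ∈ level T n) (hAk : A ⊆ level T k)
    (hsucc : ∀ t ∈ immSuc T r, ∃! a, a ∈ A ∧ t ≤ a) : IsStrongSubtree T (insert r A) := by
  have hA := (isAntichain_level hT k).subset hAk
  refine ⟨hsub, isTree_insert hrA hA, ⟨r, level_insert_zero hrA hA⟩,
    balancedTree_insert hrA hA hAne, fun j hj => ?_, fun s hs hne => ?_⟩
  · have := (hasHeight_insert hrA hA hAne j).1 hj
    interval_cases j
    · exact ⟨n, by rw [level_insert_zero hrA hA]; exact singleton_subset_iff.2 hr⟩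
    · exact ⟨k, by rwa [level_insert_one hrA hA]⟩
  · rcases hs with rfl | hs
    · rwa [immSuc_insert_self hrA hA]
    · rw [immSuc_insert_of_mem hrA hA hs] at hne
      exact absurd hne not_nonempty_empty

lemma eq_insert_level_one {S : Set α} (hS : IsTree S) (hH : HasHeight S 2)
    (hroot : level S 0 = {r}) : level S 1 = immSuc S r ∧ S = insert r (level S 1) := by
  have hr : r ∈ level S 0 := hroot ▸ mem_singleton r
  constructor
  · ext y
    refine ⟨fun ⟨hy, hylen⟩ => ?_, fun ⟨hy, _, hylen⟩ => ⟨hy, by rw [hylen, hr.2]⟩⟩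
    obtain ⟨p, hp, hplen, -⟩ := exists_parent hS hy hylen
    have hp0 : p ∈ level S 0 := ⟨hp.1, hplen⟩
    rw [hroot, mem_singleton_iff] at hp0
    exact ⟨hy, hp0 ▸ hp.2, by rw [hylen, hr.2]⟩
  · refine (insert_subset hr.1 fun y hy => hy.1).antisymm' fun y hy => ?_
    have := len_lt_of_hasHeight hH hy
    interval_cases hlen : len S y
    · have hy0 : y ∈ level S 0 := ⟨hy, hlen⟩
      rw [hroot] at hy0
      exact Or.inl hy0
    · exact Or.inr ⟨hy, hlen⟩

lemma eq_of_mem_immSuc_of_le (hT : IsTree T) {t t' s : α} (ht : t ∈ immSuc T r)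
    (ht' : t' ∈ immSuc T r) (hs : s ∈ T) (hts : t ≤ s) (ht's : t' ≤ s) : t = t' :=
  eq_of_len_eq hT hs ⟨ht.1, hts⟩ ⟨ht'.1, ht's⟩ (ht.2.2.trans ht'.2.2.symm)

def strTwoAt (T : Set α) (r : α) (k : ℕ) : Set (Set α) :=
  {S | IsStrongSubtree T S ∧ HasHeight S 2 ∧ level S 0 = {r} ∧ level S 1 ⊆ level T k}

/-- The strong subtrees of height two of `T` with level set `{n, k}`. -/
def strTwo (T : Set α) (n k : ℕ) : Set (Set α) :=
  {S | IsStrongSubtree T S ∧ HasHeight S 2 ∧ level S 0 ⊆ level T n ∧ level S 1 ⊆ level T k}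

lemma insert_range_mem_strTwoAt (hT : IsFinHomTree T b h) (hr : r ∈ level T n) (hnk : n < k)
    (hk : k < h) {g : immSuc T r → α} (hg : ∀ t, g t ∈ level T k ∩ Ici t.1) :
    insert r (range g) ∈ strTwoAt T r k := by
  have hAk : range g ⊆ level T k := range_subset_iff.2 fun t => (hg t).1
  have hrg : ∀ a ∈ range g, r < a := by
    rintro - ⟨t, rfl⟩
    exact t.2.2.1.trans_le (hg t).2
  have hAne : (range g).Nonempty :=
    have : Nonempty (immSuc T r) := (immSuc_nonempty hT hr.1 (by rw [hr.2]; omega)).to_subtype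
    range_nonempty g
  have hA := (isAntichain_level hT.1 k).subset hAk
  have hsucc : ∀ t ∈ immSuc T r, ∃! a, a ∈ range g ∧ t ≤ a := by
    refine fun t ht => ⟨g ⟨t, ht⟩, ⟨mem_range_self _, (hg ⟨t, ht⟩).2⟩, ?_⟩
    rintro - ⟨⟨t', rfl⟩, htg⟩
    obtain rfl : t = t' := eq_of_mem_immSuc_of_le hT.1 ht t'.2 (hg t').1.1 htg (hg t').2
    rfl
  refine ⟨isStrongSubtree_insert hT.1 (insert_subset hr.1 (hAk.trans fun y hy => hy.1)) hAne
    hrg hr hAk hsucc, hasHeight_insert hrg hA hAne, level_insert_zero hrg hA, ?_⟩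
  rwa [level_insert_one hrg hA]

lemma exists_insert_range_eq (hT : IsTree T) {S : Set α} (hS : S ∈ strTwoAt T r k) :
    ∃ g : immSuc T r → α, (∀ t, g t ∈ level T k ∩ Ici t.1) ∧ insert r (range g) = S := by
  obtain ⟨hstrong, hH, hroot, htop⟩ := hS
  obtain ⟨hlev1, hSeq⟩ := eq_insert_level_one hstrong.2.1 hH hroot
  have hrS : r ∈ S := (hroot ▸ mem_singleton r : r ∈ level S 0).1
  have hsucc := hstrong.2.2.2.2.2 r hrS (hlev1 ▸ (hH 1).2 one_lt_two)
  choose g hg hguniq using fun t : immSuc T r => hsucc t.1 t.2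
  have hgS : ∀ t, g t ∈ level S 1 := fun t => hlev1 ▸ (hg t).1
  refine ⟨g, fun t => ⟨htop (hgS t), (hg t).2⟩, ?_⟩
  rw [hSeq]
  congr 1
  refine (range_subset_iff.2 hgS).antisymm fun y hy => ?_
  have hry : r < y := (hlev1 ▸ hy : y ∈ immSuc S r).2.1
  obtain ⟨u, hu, huy⟩ := exists_immSuc_le hT (hstrong.1 hrS) (hstrong.1 hy.1) hry
  exact ⟨⟨u, hu⟩, (hguniq ⟨u, hu⟩ y ⟨hlev1 ▸ hy, huy⟩).symm⟩

lemma injOn_insert_range (hT : IsTree T) :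
    InjOn (fun g : immSuc T r → α => insert r (range g))
      (pi univ fun t => level T k ∩ Ici t.1) := by
  intro g hg g' hg' (heq : insert r (range g) = insert r (range g'))
  funext t
  have hgt : g t ∈ insert r (range g') := heq ▸ mem_insert_of_mem r (mem_range_self t)
  rcases hgt with hgr | ⟨t', ht'⟩
  · exact absurd (hgr ▸ t.2.2.1.trans_le (hg t trivial).2) (lt_irrefl r)
  obtain rfl : t = t' := Subtype.ext <| eq_of_mem_immSuc_of_le hT t.2 t'.2 (hg t trivial).1.1
    (hg t trivial).2 (ht' ▸ (hg' t' trivial).2)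
  exact ht'.symm

lemma ncard_strTwoAt (hT : IsFinHomTree T b h) (hb : 1 ≤ b) (hr : r ∈ level T n) (hnk : n < k)
    (hk : k < h) : (strTwoAt T r k).Finite ∧ (strTwoAt T r k).ncard = (b ^ (k - (n + 1))) ^ b := by
  obtain ⟨hfin, hcard⟩ := ncard_immSuc hT hb hr.1 (by rw [hr.2]; omega)
  have : Fintype (immSuc T r) := hfin.fintype
  have hfiber : ∀ t : immSuc T r, (level T k ∩ Ici t.1).Finite ∧
      (level T k ∩ Ici t.1).ncard = b ^ (k - (n + 1)) := by
    intro t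
    have hlen : len T t.1 = n + 1 := by rw [t.2.2.2, hr.2]
    have := ncard_level_inter_Ici hT hb t.2.1 (k := k - (n + 1)) (by omega)
    rwa [hlen, Nat.add_sub_cancel' hnk] at this
  have himage : strTwoAt T r k =
      (fun g : immSuc T r → α => insert r (range g)) '' pi univ fun t => level T k ∩ Ici t.1 := by
    refine Subset.antisymm (fun S hS => ?_) ?_
    · obtain ⟨g, hg, rfl⟩ := exists_insert_range_eq hT.1 hS
      exact ⟨g, fun t _ => hg t, rfl⟩
    · rintro - ⟨g, hg, rfl⟩
      exact insert_range_mem_strTwoAt hT hr hnk hk fun t => hg t trivial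
  rw [himage, (injOn_insert_range hT.1).ncard_image, ncard_univ_pi,
    Finset.prod_congr rfl fun t _ => (hfiber t).2, Finset.prod_const, Finset.card_univ,
    ← Nat.card_eq_fintype_card, Nat.card_coe_set_eq, hcard]
  exact ⟨(Finite.pi fun t => (hfiber t).1).image _, rfl⟩

lemma strTwo_eq_biUnion : strTwo T n k = ⋃ r ∈ level T n, strTwoAt T r k := by
  ext S
  simp only [mem_iUnion, exists_prop]
  constructor
  · rintro ⟨hstrong, hH, hlev0, hlev1⟩
    obtain ⟨r, hroot⟩ := hstrong.2.2.1
    exact ⟨r, hlev0 (hroot ▸ mem_singleton r), hstrong, hH, hroot, hlev1⟩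
  · rintro ⟨r, hr, hstrong, hH, hroot, hlev1⟩
    exact ⟨hstrong, hH, hroot ▸ singleton_subset_iff.2 hr, hlev1⟩

lemma ncard_strTwo (hT : IsFinHomTree T b h) (hb : 1 ≤ b) (hnk : n < k) (hk : k < h) :
    (strTwo T n k).Finite ∧ (strTwo T n k).ncard = b ^ n * (b ^ (k - (n + 1))) ^ b := by
  obtain ⟨hfin, hcard⟩ := ncard_level hT hb (hnk.trans hk)
  have hdisj : (level T n).PairwiseDisjoint fun r => strTwoAt T r k := by
    intro r _ r' _ hne
    refine disjoint_left.2 fun S ⟨_, _, hroot, _⟩ ⟨_, _, hroot', _⟩ => hne ?_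
    exact singleton_eq_singleton_iff.1 (hroot.symm.trans hroot')
  rw [strTwo_eq_biUnion, ← hcard]
  exact ncard_biUnion_of_const hfin (fun r hr => (ncard_strTwoAt hT hb hr hnk hk).1)
    (fun r hr => (ncard_strTwoAt hT hb hr hnk hk).2) hdisj

lemma levelSetOf_eq_pair {S : Set α} (hH : HasHeight S 2) (h0 : level S 0 ⊆ level T n)
    (h1 : level S 1 ⊆ level T k) : levelSetOf T S = {n, k} := by
  ext j
  simp only [levelSetOf, mem_ofPred_eq, mem_insert_iff, mem_singleton_iff]
  constructor
  · rintro ⟨i, ⟨y, hy⟩, hsub⟩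
    have : i < 2 := (hH i).1 ⟨y, hy⟩
    interval_cases i
    · exact Or.inl (eq_of_mem_level (hsub hy) (h0 hy))
    · exact Or.inr (eq_of_mem_level (hsub hy) (h1 hy))
  · rintro (rfl | rfl)
    exacts [⟨0, (hH 0).2 two_pos, h0⟩, ⟨1, (hH 1).2 one_lt_two, h1⟩]

lemma lt_of_mem_strTwo (hT : IsTree T) {S : Set α} (hS : S ∈ strTwo T n k) : n < k := by
  obtain ⟨hstrong, hH, h0, h1⟩ := hS
  obtain ⟨r, hroot⟩ := hstrong.2.2.1
  obtain ⟨y, hy⟩ := (hH 1).2 one_lt_two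
  have hr : r ∈ level T n := h0 (hroot ▸ mem_singleton r)
  have hry : r < y := ((eq_insert_level_one hstrong.2.1 hH hroot).1 ▸ hy : y ∈ immSuc S r).2.1
  have := len_lt_len hT hr.1 (h1 hy).1 hry
  rwa [hr.2, (h1 hy).2] at this

lemma disjoint_strTwo {n' : ℕ} (hnn' : n ≠ n') : Disjoint (strTwo T n k) (strTwo T n' k) := by
  refine disjoint_left.2 fun S ⟨_, hH, h0, _⟩ ⟨_, _, h0', _⟩ => hnn' ?_
  obtain ⟨y, hy⟩ := (hH 0).2 two_pos
  exact eq_of_mem_level (h0 hy) (h0' hy)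

end StrTwo

section VectorTree

variable {ι : Type*} {X : ι → Type*} [∀ i, PartialOrder (X i)] {T : ∀ i, Set (X i)} {k : ℕ}

lemma setOf_vStrTwo_eq_biUnion [Nonempty ι] (hT : ∀ i, IsTree (T i)) :
    {F : ∀ i, Set (X i) | IsVStrongSubtree T F ∧ (∀ i, HasHeight (F i) 2) ∧
        ∀ i, level (F i) 1 ⊆ level (T i) k} =
      ⋃ n ∈ Iio k, pi univ fun i => strTwo (T i) n k := by
  ext F
  simp only [mem_ofPred_eq, mem_iUnion, mem_Iio, mem_univ_pi, exists_prop]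
  constructor
  · rintro ⟨⟨hstrong, hlevels⟩, hH, htop⟩
    choose r hroot using fun i => (hstrong i).2.2.1
    have hmem : ∀ i, F i ∈ strTwo (T i) (len (T i) (r i)) k := fun i =>
      ⟨hstrong i, hH i, hroot i ▸ singleton_subset_iff.2 (mem_level_len
        ((hstrong i).1 (hroot i ▸ mem_singleton (r i) : r i ∈ level (F i) 0).1)), htop i⟩
    have hlt : ∀ i, len (T i) (r i) < k := fun i => lt_of_mem_strTwo (hT i) (hmem i)
    have hpair : ∀ i, levelSetOf (T i) (F i) = {len (T i) (r i), k} :=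
      fun i => levelSetOf_eq_pair (hH i) (hmem i).2.2.1 (htop i)
    let i₀ := Classical.arbitrary ι
    refine ⟨len (T i₀) (r i₀), hlt i₀, fun i => ?_⟩
    have hi : len (T i) (r i) ∈ ({len (T i₀) (r i₀), k} : Set ℕ) :=
      hpair i₀ ▸ hlevels i i₀ ▸ hpair i ▸ mem_insert _ _
    rcases hi with hi | hi
    · exact hi ▸ hmem i
    · exact absurd hi (hlt i).ne
  · rintro ⟨n, -, hF⟩
    refine ⟨⟨fun i => (hF i).1, fun i j => ?_⟩, fun i => (hF i).2.1, fun i => (hF i).2.2.2⟩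
    rw [levelSetOf_eq_pair (hF i).2.1 (hF i).2.2.1 (hF i).2.2.2,
      levelSetOf_eq_pair (hF j).2.1 (hF j).2.2.1 (hF j).2.2.2]

lemma pairwiseDisjoint_pi_strTwo [Nonempty ι] :
    (Iio k).PairwiseDisjoint fun n => pi univ fun i => strTwo (T i) n k := by
  intro n _ n' _ hne
  let i₀ := Classical.arbitrary ι
  refine disjoint_left.2 fun F hF hF' => ?_
  exact disjoint_left.1 (disjoint_strTwo hne) (hF i₀ trivial) (hF' i₀ trivial)

lemma ncard_pi_strTwo [Fintype ι] {b : ι → ℕ} {h n : ℕ} (hT : ∀ i, IsFinHomTree (T i) (b i) h)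
    (hb : ∀ i, 1 ≤ b i) (hnk : n < k) (hk : k < h) :
    (pi univ fun i => strTwo (T i) n k).Finite ∧
      (pi univ fun i => strTwo (T i) n k).ncard =
        (∏ i, b i) ^ n * (∏ i, b i ^ b i) ^ (k - (n + 1)) := by
  have hcard := fun i => ncard_strTwo (hT i) (hb i) hnk hk
  refine ⟨Finite.pi fun i => (hcard i).1, ?_⟩
  rw [ncard_univ_pi, Finset.prod_congr rfl fun i _ => (hcard i).2, Finset.prod_mul_distrib,
    Finset.prod_pow]
  congr 1
  rw [← Finset.prod_pow]
  exact Finset.prod_congr rfl fun i _ => by rw [← pow_mul, ← pow_mul, mul_comm]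

end VectorTree

lemma prod_lt_prod_pow_self {ι : Type*} [Fintype ι] [Nonempty ι] {b : ι → ℕ}
    (hb : ∀ i, 2 ≤ b i) : ∏ i, b i < ∏ i, b i ^ b i :=
  Finset.prod_lt_prod_of_nonempty (fun i _ => by have := hb i; omega)
    (fun i _ => by simpa using Nat.pow_lt_pow_right (hb i) (hb i)) Finset.univ_nonempty

lemma sum_range_pow_mul_pow_eq_div {P Q : ℕ} (hPQ : P < Q) (m : ℕ) :
    ∑ n ∈ Finset.range (m + 1), P ^ n * Q ^ (m - n) = (Q ^ (m + 1) - P ^ (m + 1)) / (Q - P) := by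
  refine (Nat.div_eq_of_eq_mul_left (Nat.sub_pos_of_lt hPQ) ?_).symm
  rw [← geom_sum₂_mul_of_le hPQ.le]
  simp

end DHL

open DHL in
/-- **Counting fact.** If `T` is a finite vector homogeneous tree with `b_T = (b_1, …, b_d)`
and of height at least `m + 2`, then the number of vector strong subtrees `F` of `T` of
height `2` with `⊗F(1) ⊆ ⊗T(m+1)` is exactly
`((∏ b_i^{b_i})^{m+1} − (∏ b_i)^{m+1}) / (∏ b_i^{b_i} − ∏ b_i)` (the division is exact). -/
theorem statement5 {d : ℕ} (hd : 1 ≤ d) (b : Fin d → ℕ) (hb : ∀ i, 2 ≤ b i) (m : ℕ)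
    (X : Fin d → Type*) [∀ i, PartialOrder (X i)] (T : ∀ i, Set (X i)) (h : ℕ)
    (hT : ∀ i, IsFinHomTree (T i) (b i) h) (hh : m + 2 ≤ h) :
    {F : ∀ i, Set (X i) | IsVStrongSubtree T F ∧ (∀ i, HasHeight (F i) 2) ∧
        ∀ i, level (F i) 1 ⊆ level (T i) (m + 1)}.ncard =
      ((∏ i, (b i) ^ (b i)) ^ (m + 1) - (∏ i, b i) ^ (m + 1)) /
        ((∏ i, (b i) ^ (b i)) - ∏ i, b i) := by
  have : Nonempty (Fin d) := ⟨⟨0, hd⟩⟩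
  have hb₁ : ∀ i, 1 ≤ b i := fun i => (hb i).trans' one_le_two
  have hpiece := fun n (hn : n ∈ Set.Iio (m + 1)) =>
    ncard_pi_strTwo hT hb₁ (Set.mem_Iio.1 hn) (show m + 1 < h by omega)
  rw [setOf_vStrTwo_eq_biUnion fun i => (hT i).1,
    (Set.finite_Iio _).ncard_biUnion (fun n hn => (hpiece n hn).1) pairwiseDisjoint_pi_strTwo,
    finsum_mem_congr rfl fun n hn => (hpiece n hn).2, ← Finset.coe_range, finsum_mem_coe_finset,
    ← sum_range_pow_mul_pow_eq_div (prod_lt_prod_pow_self hb)]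
  exact Finset.sum_congr rfl fun n _ => by rw [Nat.add_sub_add_right]
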